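/- arXiv:math/0407265 — 5 statements merged into one kernel-verified Lean document; each statement's English description precedes it below -/
import Mathlib

section
/- For nonnegative integer n and complex parameters a, c with c not a nonpositive integer, the terminating Gauss hypergeometric series satisfies Pfaff's transformation: 2F1(-n, a; c; z) = (1-z)^n · 2F1(-n, c-a; c; z/(z-1)) for all z ≠ 1. -/
/-! Since `(-n)_k / k! = (-1)^k C(n, k)`, both sides are polynomials in `z`. Expanding
`(1 - z)^(n - k)` binomially, the coefficient of `z^m` on the right becomes
`(-1)^m C(n, m) · 2F1(-m, c - a; c; 1)`, and the Chu–Vandermonde identity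
`2F1(-m, c - a; c; 1) = (a)_m / (c)_m` turns it into the coefficient on the left. Chu–Vandermonde
itself is Vandermonde's convolution for Pochhammer symbols combined with the reflection
`(x)_m = (-1)^m (1 - m - x)_m`. -/

open Finset

noncomputable def poch (x : ℂ) (k : ℕ) : ℂ := (ascPochhammer ℂ k).eval x

/-- Terminating Gauss hypergeometric series `2F1(-n, b; c; z)` as a finite sum. -/
noncomputable def hyp (n : ℕ) (b c : ℂ) (z : ℂ) : ℂ :=
  ∑ k ∈ Finset.range (n + 1),
    poch (-(n : ℂ)) k * poch b k / (poch c k * (Nat.factorial k : ℂ)) * z ^ k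

open Polynomial

theorem poch_eq_neg_one_pow_mul_descPochhammer (x : ℂ) (k : ℕ) :
    poch x k = (-1) ^ k * (descPochhammer ℤ k).smeval (-x) := by
  rw [poch, ← aeval_eq_smeval, aeval_def, ← eval_map, descPochhammer_map,
    ← ascPochhammer_eval_neg_eq_descPochhammer, neg_neg]

theorem poch_add_eq_sum (x y : ℂ) (m : ℕ) :
    poch (x + y) m = ∑ k ∈ range (m + 1), m.choose k * (poch x k * poch y (m - k)) := by
  simp_rw [poch_eq_neg_one_pow_mul_descPochhammer, neg_add,
    Ring.descPochhammer_smeval_add _ (Commute.all (-x) (-y)), mul_sum,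
    Nat.sum_antidiagonal_eq_sum_range_succ_mk]
  refine sum_congr rfl fun k hk => ?_
  rw [← pow_mul_pow_sub (-1 : ℂ) (Nat.lt_succ_iff.mp (mem_range.mp hk))]
  ring

theorem poch_neg_natCast (n k : ℕ) : poch (-n) k = (-1) ^ k * n.descFactorial k := by
  rw [poch, ascPochhammer_eval_neg_eq_descPochhammer, descPochhammer_eval_eq_descFactorial]

theorem poch_reflection (m : ℕ) (x : ℂ) : poch x m = (-1) ^ m * poch (1 - m - x) m := by
  rw [poch, poch, show 1 - m - x = -(x + m - 1) by ring,
    ascPochhammer_eval_neg_eq_descPochhammer, descPochhammer_eval_eq_ascPochhammer,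
    show x + m - 1 - m + 1 = x by ring, ← mul_assoc, ← mul_pow]
  norm_num

theorem poch_ne_zero {c : ℂ} (hc : ∀ m : ℕ, c ≠ -(m : ℂ)) (k : ℕ) : poch c k ≠ 0 := by
  rw [poch, Ne, ascPochhammer_eval_eq_zero_iff]
  rintro ⟨m, -, hm⟩
  exact hc m (by rw [hm, neg_neg])

theorem poch_add (x : ℂ) (i j : ℕ) : poch x (i + j) = poch x i * poch (x + i) j := by
  rw [poch, ← ascPochhammer_mul, eval_mul, eval_comp]
  simp [poch]

theorem hyp_eq_sum_choose (n : ℕ) (b c z : ℂ) :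
    hyp n b c z = ∑ k ∈ range (n + 1), n.choose k * (poch b k / poch c k) * (-z) ^ k := by
  refine sum_congr rfl fun k _ => ?_
  have hk : (k.factorial : ℂ) ≠ 0 := by exact_mod_cast k.factorial_ne_zero
  rw [poch_neg_natCast, Nat.descFactorial_eq_factorial_mul_choose, neg_pow z]
  push_cast
  field_simp

theorem chu_vandermonde {c : ℂ} (hc : ∀ m : ℕ, c ≠ -(m : ℂ)) (b : ℂ) (m : ℕ) :
    hyp m (c - b) c 1 = poch b m / poch c m := by
  rw [hyp_eq_sum_choose, eq_div_iff (poch_ne_zero hc m), sum_mul]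
  calc ∑ k ∈ range (m + 1), m.choose k * (poch (c - b) k / poch c k) * (-1) ^ k * poch c m
      = ∑ k ∈ range (m + 1),
          (-1) ^ m * (m.choose k * (poch (c - b) k * poch (1 - m - c) (m - k))) := by
        refine sum_congr rfl fun k hk => ?_
        have hkm : k ≤ m := Nat.lt_succ_iff.mp (mem_range.mp hk)
        -- `(c)_m / (c)_k = (c + k)_(m - k)`; reflecting it makes the sum a Vandermonde convolution
        have hck := poch_ne_zero hc k
        rw [← Nat.add_sub_cancel' hkm, poch_add, Nat.add_sub_cancel' hkm,
          poch_reflection (m - k), Nat.cast_sub hkm,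
          show (1 : ℂ) - (m - k) - (c + k) = 1 - m - c by ring,
          ← pow_mul_pow_sub (-1 : ℂ) hkm]
        field_simp
    _ = (-1) ^ m * poch (c - b + (1 - m - c)) m := by rw [poch_add_eq_sum, mul_sum]
    _ = poch b m := by rw [show c - b + (1 - m - c) = 1 - m - b by ring, ← poch_reflection]

theorem sum_choose_mul_pow_mul_one_sub_pow {R : Type*} [CommRing R] (f : ℕ → R) (n : ℕ)
    (z : R) :
    ∑ k ∈ range (n + 1), n.choose k * f k * z ^ k * (1 - z) ^ (n - k) =
      ∑ m ∈ range (n + 1),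
        n.choose m * (∑ k ∈ range (m + 1), m.choose k * f k * (-1) ^ k) * (-z) ^ m := by
  calc ∑ k ∈ range (n + 1), n.choose k * f k * z ^ k * (1 - z) ^ (n - k)
      = ∑ k ∈ range (n + 1), ∑ j ∈ range (n + 1 - k),
          n.choose k * (n - k).choose j * f k * (-1) ^ k * (-z) ^ (k + j) := by
        refine sum_congr rfl fun k hk => ?_
        have hkn : k ≤ n := Nat.lt_succ_iff.mp (mem_range.mp hk)
        rw [show 1 - z = -z + 1 by ring, add_pow, ← Nat.sub_add_comm hkn, mul_sum]
        refine sum_congr rfl fun j _ => ?_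
        rw [pow_add, show z ^ k = (-1) ^ k * (-z) ^ k by rw [← mul_pow]; ring]
        ring
    _ = ∑ m ∈ range (n + 1), ∑ k ∈ range (m + 1),
          n.choose k * (n - k).choose (m - k) * f k * (-1) ^ k * (-z) ^ (k + (m - k)) :=
        (sum_range_diag_flip (n + 1) _).symm
    _ = _ := by
        refine sum_congr rfl fun m _ => ?_
        rw [mul_sum, sum_mul]
        refine sum_congr rfl fun k hk => ?_
        have hkm : k ≤ m := Nat.lt_succ_iff.mp (mem_range.mp hk)
        have hchoose : (n.choose m * m.choose k : R) = n.choose k * (n - k).choose (m - k) := by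
          rw [← Nat.cast_mul, ← Nat.cast_mul, Nat.choose_mul hkm]
        rw [Nat.add_sub_cancel' hkm, ← hchoose]
        ring

theorem pfaff_terminating (n : ℕ) (a c : ℂ) (hc : ∀ m : ℕ, c ≠ -(m : ℂ))
    (z : ℂ) (hz : z ≠ 1) :
    hyp n a c z = (1 - z) ^ n * hyp n (c - a) c (z / (z - 1)) := by
  have h1z : 1 - z ≠ 0 := sub_ne_zero.mpr hz.symm
  rw [hyp_eq_sum_choose, hyp_eq_sum_choose, mul_sum]
  calc ∑ m ∈ range (n + 1), n.choose m * (poch a m / poch c m) * (-z) ^ m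
      = ∑ m ∈ range (n + 1), n.choose m *
          (∑ k ∈ range (m + 1), m.choose k * (poch (c - a) k / poch c k) * (-1) ^ k) *
            (-z) ^ m := by
        refine sum_congr rfl fun m _ => ?_
        rw [← chu_vandermonde hc, hyp_eq_sum_choose]
    _ = ∑ k ∈ range (n + 1),
          n.choose k * (poch (c - a) k / poch c k) * z ^ k * (1 - z) ^ (n - k) :=
        (sum_choose_mul_pow_mul_one_sub_pow _ n z).symm
    _ = _ := by
        refine sum_congr rfl fun k hk => ?_
        have hkn : k ≤ n := Nat.lt_succ_iff.mp (mem_range.mp hk)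
        rw [← pow_mul_pow_sub (1 - z) hkn, ← neg_sub 1 z, div_neg, neg_neg, div_pow]
        field_simp
end

section
/- For nonnegative integers n ≤ N and complex a, z with |z| suitably restricted (or as a formal power series identity), the regularized hypergeometric function satisfies: F̂(-n, a; -N; z) = (-1)^{N-n} (Γ(a) N!/n!) · 2F1(-n, a; -N; z) + (Γ(a+N+1)(N-n)!/(N+1)!) · z^{N+1} · 2F1(N-n+1, a+N+1; N+2; z), where 2F1(-n, a; -N; z) denotes the terminating sum ∑_{k=0}^n ((-n)_k(a)_k/((-N)_k k!)) z^k. -/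
/-!
For `n ≤ N` and `m = N - n`, the singular quotient `Γ(-n + k + ε) / Γ(-N + k + ε)` equals
the polynomial `(k - N + ε)_m` as soon as `ε` is a small nonzero number, so its limit is
`(k - N)_m`. This Pochhammer symbol vanishes for `n < k ≤ N`, equals
`(-1)^m (N!/n!) (-n)_k / (-N)_k` for `k ≤ n`, and equals `(N - n)! (N - n + 1)_j / j!`
for `k = N + 1 + j`. So the coefficients with `k ≤ n` give the terminating `2F1`, those with
`k > N` the shifted series.
-/

open Finset

open Filter Topology Polynomial Nat Complex

theorem ascPochhammer_eval_mul_eval_add_comm {S : Type*} [CommSemiring S] (m l : ℕ) (x : S) :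
    (ascPochhammer S m).eval x * (ascPochhammer S l).eval (x + m) =
      (ascPochhammer S l).eval x * (ascPochhammer S m).eval (x + l) := by
  have h (i j : ℕ) : (ascPochhammer S i).eval x * (ascPochhammer S j).eval (x + i) =
      (ascPochhammer S (i + j)).eval x := by
    simp [← ascPochhammer_mul]
  rw [h, h, add_comm]

theorem ascPochhammer_eval_neg_natCast_mul_factorial {R : Type*} [CommRing R] {n N : ℕ}
    (hnN : n ≤ N) :
    (ascPochhammer R (N - n)).eval (-(N : R)) * n ! = (-1) ^ (N - n) * N ! := by
  rw [ascPochhammer_eval_neg_eq_descPochhammer, descPochhammer_eval_eq_descFactorial,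
    ← Nat.factorial_mul_descFactorial (Nat.sub_le N n), Nat.sub_sub_self hnN]
  push_cast
  ring

namespace Complex

theorem Gamma_add_nat_eq_mul {z : ℂ} (hz : ∀ m : ℕ, z ≠ -m) (k : ℕ) :
    Gamma (z + k) = (ascPochhammer ℂ k).eval z * Gamma z := by
  rw [← Gamma_add_nat_div_Gamma_eq z hz, div_mul_cancel₀ _ (Gamma_ne_zero hz)]

theorem eventually_intCast_add_ne_neg_natCast (x : ℤ) :
    ∀ᶠ ε in 𝓝[≠] (0 : ℂ), ∀ m : ℕ, (x : ℂ) + ε ≠ -m := by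
  filter_upwards [self_mem_nhdsWithin,
    nhdsWithin_le_nhds (Metric.ball_mem_nhds (0 : ℂ) one_pos)] with ε hε0 hε1 m hm
  have hε : ε = ((-m - x : ℤ) : ℂ) := by push_cast; linear_combination hm
  rw [mem_ball_zero_iff, hε, norm_intCast] at hε1
  have hint : -(m : ℤ) - x = 0 := Int.abs_lt_one_iff.mp (mod_cast hε1)
  exact hε0 (by simp [hε, hint])

theorem tendsto_Gamma_add_nat_div_Gamma_nhdsNE (x : ℤ) (m : ℕ) :
    Tendsto (fun ε : ℂ => Gamma (x + m + ε) / Gamma (x + ε)) (𝓝[≠] 0)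
      (𝓝 ((ascPochhammer ℂ m).eval (x : ℂ))) := by
  have hcont : Tendsto (fun ε : ℂ => (ascPochhammer ℂ m).eval ((x : ℂ) + ε)) (𝓝[≠] 0)
      (𝓝 ((ascPochhammer ℂ m).eval (x : ℂ))) :=
    tendsto_nhdsWithin_of_tendsto_nhds <|
      ((ascPochhammer ℂ m).continuous.comp (continuous_const_add (x : ℂ))).tendsto' 0 _
        (by simp)
  refine hcont.congr' ?_
  filter_upwards [eventually_intCast_add_ne_neg_natCast x] with ε hε
  rw [← Gamma_add_nat_div_Gamma_eq _ hε, add_right_comm]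

end Complex

theorem summable_hypergeometric_term (a b : ℂ) {c : ℂ} (hc : ∀ m : ℕ, c ≠ -m) {z : ℂ}
    (hz : ‖z‖ < 1) :
    Summable fun k : ℕ => poch a k * poch b k / (poch c k * k !) * z ^ k := by
  have hr : z ∈ Metric.eball 0 (regularizedGaussHGFunSeries a b c).radius :=
    mem_eball_zero_iff.mpr <| lt_of_lt_of_le (by rw [enorm_eq_nnnorm]; exact_mod_cast hz)
      (radius_regularizedGaussHGFunSeries_ge_one a b c)
  refine (((regularizedGaussHGFunSeries a b c).summable hr).mul_left (Gamma c)).congr fun k => ?_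
  rw [FormalMultilinearSeries.apply_eq_pow_smul_coeff, coeff_regularizedGaussHGFunSeries,
    Gamma_add_nat_eq_mul hc, smul_eq_mul, poch, poch, poch]
  have := Gamma_ne_zero hc
  field_simp

/-- The `k`-th coefficient of the regularized series `F̂(-n, a; -N; ·)`, in closed form. -/
noncomputable def regularizedCoeff (n N : ℕ) (a : ℂ) (k : ℕ) : ℂ :=
  (ascPochhammer ℂ (N - n)).eval ((k : ℂ) - N) * Gamma (a + k) / k !

theorem tendsto_Gamma_quotient_regularizedCoeff {n N : ℕ} (hnN : n ≤ N) (a : ℂ) (k : ℕ) :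
    Tendsto (fun ε : ℂ => Gamma (-(n : ℂ) + k + ε) * Gamma (a + k) /
        (Gamma (-(N : ℂ) + k + ε) * Gamma (1 + k))) (𝓝[≠] 0)
      (𝓝 (regularizedCoeff n N a k)) := by
  have h := (tendsto_Gamma_add_nat_div_Gamma_nhdsNE (k - N) (N - n)).mul_const
    (Gamma (a + k) / k !)
  have hn : (((k - N : ℤ) : ℂ) + ((N - n : ℕ) : ℂ)) = -(n : ℂ) + k := by
    push_cast [Nat.cast_sub hnN]; ring
  have hN : ((k - N : ℤ) : ℂ) = -(N : ℂ) + k := by push_cast; ring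
  rw [hn, hN] at h
  convert h using 2 with ε
  · rw [add_comm 1, Gamma_nat_eq_factorial]; ring
  · rw [regularizedCoeff, ← hN]; push_cast; ring

theorem sum_range_regularizedCoeff_mul_pow {n N : ℕ} (hnN : n ≤ N) {a : ℂ}
    (ha : ∀ m : ℕ, a ≠ -m) (z : ℂ) :
    ∑ k ∈ range (N + 1), regularizedCoeff n N a k * z ^ k =
      (-1) ^ (N - n) * (Gamma a * N ! / n !) * hyp n a (-(N : ℂ)) z := by
  have hvanish : ∀ k ∈ range (N + 1), k ∉ range (n + 1) →
      regularizedCoeff n N a k * z ^ k = 0 := by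
    intro k hkN hkn
    simp only [mem_range] at hkN hkn
    rw [regularizedCoeff, (ascPochhammer_eval_eq_zero_iff _ _).mpr
      ⟨N - k, by omega, by push_cast [Nat.cast_sub (by omega : k ≤ N)]; ring⟩]
    simp
  rw [← sum_subset (range_subset_range.mpr (by omega)) hvanish, hyp, mul_sum]
  refine sum_congr rfl fun k hk => ?_
  have hkn : k ≤ n := by simpa [Nat.lt_succ_iff] using hk
  have hswap := ascPochhammer_eval_mul_eval_add_comm k (N - n) (-(N : ℂ))
  have hkN : -(N : ℂ) + k = k - N := by ring
  have hNn : -(N : ℂ) + ((N - n : ℕ) : ℂ) = -n := by push_cast [Nat.cast_sub hnN]; ring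
  rw [hkN, hNn] at hswap
  have hN : (ascPochhammer ℂ k).eval (-(N : ℂ)) ≠ 0 := by
    rw [ne_eq, ascPochhammer_eval_eq_zero_iff]
    rintro ⟨i, hi, h⟩
    have : i = N := by exact_mod_cast neg_neg (N : ℂ) ▸ h
    omega
  have hfac := ascPochhammer_eval_neg_natCast_mul_factorial (R := ℂ) hnN
  have hk! : (k ! : ℂ) ≠ 0 := mod_cast k.factorial_ne_zero
  have hn! : (n ! : ℂ) ≠ 0 := mod_cast n.factorial_ne_zero
  rw [regularizedCoeff, Gamma_add_nat_eq_mul ha, poch, poch, poch]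
  field_simp
  linear_combination (eval a (ascPochhammer ℂ k) * Gamma a * z ^ k) *
    ((n ! : ℂ) * hswap + eval (-(n : ℂ)) (ascPochhammer ℂ k) * hfac)

theorem regularizedCoeff_add_succ {n N : ℕ} (hnN : n ≤ N) {a : ℂ} (ha : ∀ m : ℕ, a ≠ -m)
    (j : ℕ) :
    regularizedCoeff n N a (j + (N + 1)) =
      Gamma (a + N + 1) * (N - n) ! / (N + 1) ! *
        (poch ((N : ℂ) - n + 1) j * poch (a + N + 1) j / (poch ((N : ℂ) + 2) j * j !)) := by
  have hB : ∀ m : ℕ, a + N + 1 ≠ -m :=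
    fun m h => ha (m + N + 1) (by push_cast; linear_combination h)
  have hshift : ((j + (N + 1) : ℕ) : ℂ) - N = (j : ℂ) + 1 := by push_cast; ring
  have hGamma : Gamma (a + ((j + (N + 1) : ℕ) : ℂ)) =
      (ascPochhammer ℂ j).eval (a + N + 1) * Gamma (a + N + 1) := by
    rw [← Gamma_add_nat_eq_mul hB]; push_cast; ring_nf
  have hA := factorial_mul_ascPochhammer ℂ j (N - n)
  have hA' := factorial_mul_ascPochhammer ℂ (N - n) j
  have hC := factorial_mul_ascPochhammer ℂ (N + 1) j
  rw [add_comm (N - n)] at hA'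
  rw [add_comm (N + 1)] at hC
  push_cast [Nat.cast_sub hnN, add_assoc, one_add_one_eq_two] at hA' hC
  simp only [regularizedCoeff, poch]
  rw [hshift, hGamma, ← hC]
  have hj! : (j ! : ℂ) ≠ 0 := mod_cast j.factorial_ne_zero
  have hN! : ((N + 1) ! : ℂ) ≠ 0 := mod_cast (N + 1).factorial_ne_zero
  field_simp
  congr 1
  linear_combination (eval (a + N + 1) (ascPochhammer ℂ j) * Gamma (a + N + 1)) *
    (hA.trans hA'.symm)

open Filter Topology in
/-- Lemma on the regularized hypergeometric function `F̂(-n, a; -N; z)`, whose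
coefficients `f k` are defined by taking limits (residues) of the singular
gamma-quotient summands. -/
theorem regularized_2F1_decomposition (n N : ℕ) (hnN : n ≤ N) (a : ℂ)
    (ha : ∀ m : ℕ, a ≠ -(m : ℂ)) (z : ℂ) (hz : ‖z‖ < 1)
    (f : ℕ → ℂ)
    (hf : ∀ k : ℕ, Tendsto
      (fun ε : ℂ => Complex.Gamma (-(n : ℂ) + k + ε) * Complex.Gamma (a + k) /
        (Complex.Gamma (-(N : ℂ) + k + ε) * Complex.Gamma (1 + k)))
      (𝓝[≠] 0) (𝓝 (f k))) :
    ∑' k : ℕ, f k * z ^ k =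
      (-1) ^ (N - n) * (Complex.Gamma a * (Nat.factorial N : ℂ) / (Nat.factorial n : ℂ)) *
        hyp n a (-(N : ℂ)) z +
      Complex.Gamma (a + N + 1) * (Nat.factorial (N - n) : ℂ) / (Nat.factorial (N + 1) : ℂ) *
        z ^ (N + 1) *
        ∑' k : ℕ, poch ((N : ℂ) - n + 1) k * poch (a + N + 1) k /
          (poch ((N : ℂ) + 2) k * (Nat.factorial k : ℂ)) * z ^ k := by
  obtain rfl : f = regularizedCoeff n N a :=
    funext fun k => tendsto_nhds_unique (hf k) (tendsto_Gamma_quotient_regularizedCoeff hnN a k)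
  have htail (j : ℕ) : regularizedCoeff n N a (j + (N + 1)) * z ^ (j + (N + 1)) =
      Gamma (a + N + 1) * (N - n) ! / (N + 1) ! * z ^ (N + 1) *
        (poch ((N : ℂ) - n + 1) j * poch (a + N + 1) j / (poch ((N : ℂ) + 2) j * j !) *
          z ^ j) := by
    rw [regularizedCoeff_add_succ hnN ha j, pow_add]; ring
  have hC (m : ℕ) : (N : ℂ) + 2 ≠ -m := by
    rw [ne_eq, ← sub_eq_zero, sub_neg_eq_add]; exact_mod_cast (by omega : N + 2 + m ≠ 0)
  have hsum := (summable_hypergeometric_term ((N : ℂ) - n + 1) (a + N + 1) hC hz).mul_left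
    (Gamma (a + N + 1) * (N - n) ! / (N + 1) ! * z ^ (N + 1))
  rw [← Summable.sum_add_tsum_nat_add' (k := N + 1) (hsum.congr fun j => (htail j).symm),
    sum_range_regularizedCoeff_mul_pow hnN ha, tsum_congr htail, tsum_mul_left]
end

section
/- For all x ∈ ℂ where both sides are defined (x not an integer), Γ'(x)/Γ(x)² = Γ'(1-x)/(Γ(x)Γ(1-x)) - cos(πx)·Γ(1-x). Moreover, the left-hand side x ↦ Γ'(x)/Γ(x)² extends to an entire function, and at x = -m for m ∈ ℤ≥0 its value is (-1)^{m+1} m!. -/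
/-!
Away from the positive integers the reflection formula can be written as
`1/Γ(z) = Γ(1 - z) sin(πz) / π`, an identity between functions holomorphic near `z`; at the poles
`z = -m` of `Γ` both sides vanish. Differentiating it gives `-Γ'/Γ²` in terms of `Γ(1 - x)`,
which yields the identity at non-integers and the value `(-1)^m m!` of `(1/Γ)'` at `-m`.
The entire extension of `Γ'/Γ²` is `-(1/Γ)'`.
-/

open Real Nat

namespace Complex

lemma sin_pi_mul_ne_zero {x : ℂ} (hx : ∀ m : ℤ, x ≠ m) : sin (π * x) ≠ 0 := by
  rw [sin_ne_zero_iff]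
  intro k hk
  exact hx k (mul_left_cancel₀ (ofReal_ne_zero.2 pi_ne_zero) (hk.trans (mul_comm _ _)))

lemma Gamma_mul_Gamma_one_sub_mul_sin {x : ℂ} (hx : sin (π * x) ≠ 0) :
    Gamma x * Gamma (1 - x) * sin (π * x) = π := by
  rw [Gamma_mul_Gamma_one_sub, div_mul_cancel₀ _ hx]

lemma inv_Gamma_eq_Gamma_one_sub_mul_sin {z : ℂ} (h : Gamma (1 - z) ≠ 0) :
    (Gamma z)⁻¹ = Gamma (1 - z) * sin (π * z) / π :=
  calc (Gamma z)⁻¹ = Gamma (1 - z) * (Gamma z * Gamma (1 - z))⁻¹ := by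
        rw [mul_inv, mul_left_comm, mul_inv_cancel₀ h, mul_one]
    _ = Gamma (1 - z) * sin (π * z) / π := by
        rw [Gamma_mul_Gamma_one_sub, inv_div, mul_div_assoc]

lemma differentiableAt_Gamma_of_ne_zero {s : ℂ} (h : Gamma s ≠ 0) : DifferentiableAt ℂ Gamma s :=
  differentiableAt_Gamma s fun m hm => h (hm ▸ Gamma_neg_nat_eq_zero m)

lemma hasDerivAt_inv_Gamma_of_ne_zero {x : ℂ} (h : Gamma x ≠ 0) :
    HasDerivAt (fun z => (Gamma z)⁻¹) (-deriv Gamma x / Gamma x ^ 2) x :=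
  (differentiableAt_Gamma_of_ne_zero h).hasDerivAt.inv h

lemma hasDerivAt_inv_Gamma_of_Gamma_one_sub_ne_zero {x : ℂ} (h : Gamma (1 - x) ≠ 0) :
    HasDerivAt (fun z => (Gamma z)⁻¹)
      ((Gamma (1 - x) * (cos (π * x) * π) - deriv Gamma (1 - x) * sin (π * x)) / π) x := by
  have hΓ : HasDerivAt (fun z => Gamma (1 - z)) (-deriv Gamma (1 - x)) x :=
    (differentiableAt_Gamma_of_ne_zero h).hasDerivAt.comp_const_sub 1 x
  have hsin : HasDerivAt (fun z => sin (π * z)) (cos (π * x) * π) x := by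
    simpa using ((hasDerivAt_id x).const_mul (π : ℂ)).csin
  have hrefl : (fun z => (Gamma z)⁻¹) =ᶠ[nhds x] fun z => Gamma (1 - z) * sin (π * z) / π :=
    (hΓ.continuousAt.eventually_ne h).mono fun z hz => inv_Gamma_eq_Gamma_one_sub_mul_sin hz
  exact (((hΓ.mul hsin).div_const (π : ℂ)).congr_of_eventuallyEq hrefl).congr_deriv (by ring)

lemma deriv_Gamma_div_Gamma_sq_eq {x : ℂ} (hx : ∀ m : ℤ, x ≠ m) :
    deriv Gamma x / Gamma x ^ 2 =
      deriv Gamma (1 - x) / (Gamma x * Gamma (1 - x)) - cos (π * x) * Gamma (1 - x) := by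
  have hrefl := Gamma_mul_Gamma_one_sub_mul_sin (sin_pi_mul_ne_zero hx)
  have hpi : (π : ℂ) ≠ 0 := ofReal_ne_zero.2 pi_ne_zero
  obtain ⟨hΓ, hΓ_one_sub⟩ := mul_ne_zero_iff.1 (left_ne_zero_of_mul (hrefl ▸ hpi))
  have hderiv := (hasDerivAt_inv_Gamma_of_ne_zero hΓ).unique
    (hasDerivAt_inv_Gamma_of_Gamma_one_sub_ne_zero hΓ_one_sub)
  have hsin : sin (π * x) / π = (Gamma x * Gamma (1 - x))⁻¹ := by
    field_simp
    linear_combination hrefl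
  rw [div_eq_mul_inv (deriv Gamma (1 - x)), ← hsin]
  field_simp at hderiv ⊢
  linear_combination -hderiv

lemma deriv_inv_Gamma_neg_nat (m : ℕ) :
    deriv (fun z => (Gamma z)⁻¹) (-m) = (-1) ^ m * m ! := by
  have hΓ : Gamma (1 - -m) = m ! := by
    rw [sub_neg_eq_add, add_comm, Gamma_nat_eq_factorial]
  have hsin : sin (π * -m) = 0 := by
    rw [mul_neg, sin_neg, mul_comm, sin_nat_mul_pi, neg_zero]
  have hcos : cos (π * -m) = (-1) ^ m := by
    rw [mul_neg, cos_neg, mul_comm]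
    exact_mod_cast Real.cos_nat_mul_pi m
  have hΓ_ne_zero : Gamma (1 - -m) ≠ 0 := hΓ ▸ Nat.cast_ne_zero.2 m.factorial_ne_zero
  rw [(hasDerivAt_inv_Gamma_of_Gamma_one_sub_ne_zero hΓ_ne_zero).deriv, hΓ, hsin, hcos]
  field_simp
  ring

end Complex

theorem gamma_deriv_reflection_and_entire_extension :
    (∀ x : ℂ, (∀ m : ℤ, x ≠ (m : ℂ)) →
      deriv Complex.Gamma x / Complex.Gamma x ^ 2 =
        deriv Complex.Gamma (1 - x) / (Complex.Gamma x * Complex.Gamma (1 - x)) -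
          Complex.cos ((Real.pi : ℂ) * x) * Complex.Gamma (1 - x)) ∧
    ∃ g : ℂ → ℂ, Differentiable ℂ g ∧
      (∀ x : ℂ, (∀ m : ℕ, x ≠ -(m : ℂ)) →
        g x = deriv Complex.Gamma x / Complex.Gamma x ^ 2) ∧
      (∀ m : ℕ, g (-(m : ℂ)) = (-1) ^ (m + 1) * (Nat.factorial m : ℂ)) := by
  refine ⟨fun x hx => Complex.deriv_Gamma_div_Gamma_sq_eq hx,
    fun x => -deriv (fun z => (Complex.Gamma z)⁻¹) x,
    Complex.differentiable_one_div_Gamma.deriv.neg, fun x hx => ?_, fun m => ?_⟩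
  · dsimp only
    rw [(Complex.hasDerivAt_inv_Gamma_of_ne_zero (Complex.Gamma_ne_zero hx)).deriv, neg_div, neg_neg]
  · dsimp only
    rw [Complex.deriv_inv_Gamma_neg_nat, pow_succ]
    ring
end

section
/- For b not a nonpositive integer and n, k nonnegative integers with k ≥ n+1, the limit lim_{b→-n} (b)_k · ψ(1-b-k) = (-1)^n n! (k-n-1)!, where (b)_k is the Pochhammer symbol and ψ the digamma function. -/
open Filter Topology

/-- The digamma function `ψ = Γ'/Γ`. -/
noncomputable def psi (x : ℂ) : ℂ := deriv Complex.Gamma x / Complex.Gamma x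

/-!
Write `k = n + 1 + m`. Then `(b)_k = (b + n) · (b)_n · (b + n + 1)_m`, and the last two factors are
continuous in `b` with value `(-1)^n n! · m!` at `b = -n`. With `s = 1 - b - k`, we have
`b + n = -(s + m)` and `s → -m`, so it remains to see that `ψ` has residue `-1` at `-m`. This
follows from the recurrence `ψ(s + 1) = ψ(s) + 1/s`, which, iterated `m + 1` times, gives
`ψ(s) = ψ(s + m + 1) - Σ_{j<m} 1/(s + j) - 1/(s + m)` with the first two terms regular at `-m`.
-/

open Finset
open scoped Nat

namespace Complex

lemma analyticAt_Gamma {s : ℂ} (hs : ∀ m : ℕ, s ≠ -m) : AnalyticAt ℂ Gamma s := by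
  have hGamma : Gamma = (fun z => (Gamma z)⁻¹)⁻¹ := by
    funext z
    simp
  rw [hGamma]
  exact (differentiable_one_div_Gamma.analyticAt s).inv (inv_ne_zero (Gamma_ne_zero hs))

lemma continuousAt_digamma {s : ℂ} (hs : ∀ m : ℕ, s ≠ -m) : ContinuousAt digamma s :=
  (analyticAt_Gamma hs).deriv.continuousAt.div (analyticAt_Gamma hs).continuousAt
    (Gamma_ne_zero hs)

lemma digamma_add_nat {s : ℂ} (hs : ∀ m : ℕ, s ≠ -m) (n : ℕ) :
    digamma (s + n) = digamma s + ∑ j ∈ range n, (s + j)⁻¹ := by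
  induction n with
  | zero => simp
  | succ n ih =>
    have hsn : ∀ m : ℕ, s + n ≠ -m := fun m h => hs (m + n) (by push_cast; linear_combination h)
    rw [Nat.cast_succ, ← add_assoc, digamma_apply_add_one _ hsn, ih, sum_range_succ, add_assoc]

lemma eventually_ne_neg_nat (m : ℕ) : ∀ᶠ s : ℂ in 𝓝[≠] (-m), ∀ i : ℕ, s ≠ -i := by
  filter_upwards [nhdsWithin_le_nhds (Metric.ball_mem_nhds (-(m : ℂ)) one_pos),
    self_mem_nhdsWithin] with s hball hne i rfl
  have hdist : |(m : ℤ) - i| < 1 := by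
    rw [Metric.mem_ball, dist_eq, show -(i : ℂ) - -m = ((m - i : ℤ) : ℂ) by push_cast; ring,
      norm_intCast] at hball
    exact_mod_cast hball
  exact hne (by rw [show i = m by rw [abs_lt] at hdist; omega, Set.mem_singleton_iff])

lemma tendsto_add_nat_mul_digamma (m : ℕ) :
    Tendsto (fun s => (s + m) * digamma s) (𝓝[≠] (-m)) (𝓝 (-1)) := by
  set f : ℂ → ℂ := fun s => digamma (s + m + 1) - ∑ j ∈ range m, (s + j)⁻¹
  have hf : ContinuousAt f (-m) := by
    have hone : ∀ i : ℕ, -(m : ℂ) + m + 1 ≠ -i := fun i h =>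
      Nat.cast_add_one_ne_zero i (by linear_combination h)
    have hshift : ContinuousAt (fun s => digamma (s + m + 1)) (-m) :=
      (continuousAt_digamma hone).comp (f := fun s : ℂ => s + m + 1) (by fun_prop)
    refine hshift.sub (tendsto_finsetSum _ fun j hj => ?_)
    refine (continuous_add_const (j : ℂ)).continuousAt.inv₀ ?_
    rw [neg_add_eq_sub, sub_ne_zero, Ne, Nat.cast_inj]
    exact (mem_range.mp hj).ne
  have hlim : Tendsto (fun s => (s + m) * f s - 1) (𝓝[≠] (-m)) (𝓝 (-1)) := by
    have : Tendsto (fun s : ℂ => s + m) (𝓝 (-m)) (𝓝 0) := by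
      simpa using (continuous_add_const (m : ℂ)).tendsto (-(m : ℂ))
    simpa using ((this.mul hf.tendsto).sub_const 1).mono_left nhdsWithin_le_nhds
  refine hlim.congr' ?_
  filter_upwards [eventually_ne_neg_nat m, self_mem_nhdsWithin] with s hs hsm
  have hsm' : s + m ≠ 0 := fun h => hsm (eq_neg_of_add_eq_zero_left h)
  simp only [f, add_assoc, ← Nat.cast_succ, digamma_add_nat hs, sum_range_succ]
  field_simp
  ring

end Complex

lemma psi_eq_digamma : psi = Complex.digamma := rfl

lemma poch_add_s8 (b : ℂ) (n m : ℕ) : poch b (n + m) = poch b n * poch (b + n) m := by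
  simp [poch, ← ascPochhammer_mul, Polynomial.eval_comp]

lemma poch_succ (b : ℂ) (m : ℕ) : poch b (m + 1) = b * poch (b + 1) m := by
  simp [poch, ascPochhammer_succ_left, Polynomial.eval_comp]

lemma poch_neg_nat_self (n : ℕ) : poch (-n) n = (-1) ^ n * n ! := by
  rw [poch, ascPochhammer_eval_neg_eq_descPochhammer, descPochhammer_eval_eq_descFactorial,
    Nat.descFactorial_self]

lemma poch_one (m : ℕ) : poch 1 m = m ! := ascPochhammer_eval_one ℂ m

lemma continuous_poch (k : ℕ) : Continuous fun b => poch b k := (ascPochhammer ℂ k).continuous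

theorem pochhammer_mul_psi_limit (n k : ℕ) (hk : n + 1 ≤ k) :
    Tendsto (fun b : ℂ => poch b k * psi (1 - b - k)) (𝓝[≠] (-(n : ℂ)))
      (𝓝 ((-1) ^ n * (Nat.factorial n : ℂ) * (Nat.factorial (k - n - 1) : ℂ))) := by
  obtain ⟨m, rfl⟩ : ∃ m, k = n + (m + 1) := ⟨k - n - 1, by omega⟩
  have hregular : Tendsto (fun b => poch b n * poch (b + n + 1) m) (𝓝[≠] (-n))
      (𝓝 ((-1) ^ n * n ! * m !)) := by
    have hcont : Continuous fun b : ℂ => poch b n * poch (b + n + 1) m :=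
      (continuous_poch n).mul ((continuous_poch m).comp (by fun_prop))
    simpa [poch_neg_nat_self, poch_one, mul_assoc] using
      (hcont.tendsto (-n)).mono_left nhdsWithin_le_nhds
  have hreflect : Tendsto (fun b : ℂ => 1 - b - ↑(n + (m + 1))) (𝓝[≠] (-n)) (𝓝[≠] (-m)) := by
    have h : Tendsto (fun b : ℂ => 1 - ↑(n + (m + 1)) - b) (𝓝[≠] (-n))
        (𝓝[≠] (1 - ↑(n + (m + 1)) - -n)) := map_subLeft_nhdsNE.le
    rw [show 1 - ((n + (m + 1) : ℕ) : ℂ) - -n = -m by push_cast; ring] at h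
    exact h.congr fun b => by ring
  have hpole : Tendsto (fun b => (b + n) * psi (1 - b - ↑(n + (m + 1)))) (𝓝[≠] (-n)) (𝓝 1) := by
    have h := ((Complex.tendsto_add_nat_mul_digamma m).comp hreflect).neg
    rw [neg_neg] at h
    refine h.congr fun b => ?_
    simp only [Function.comp_apply, psi_eq_digamma]
    push_cast
    ring
  have hlim := hregular.mul hpole
  rw [mul_one] at hlim
  rw [show n + (m + 1) - n - 1 = m by omega]
  refine hlim.congr fun b => ?_
  rw [poch_add_s8, poch_succ]
  ring
end

section
/- Let n, m, ℓ be nonnegative integers. Then 2F1(-ℓ, -n-ℓ; -m-n-2ℓ; z) = ((n+ℓ)!(n+m+ℓ)!/(n!(n+m+2ℓ)!)) · (-z)^ℓ · 2F1(-ℓ, n+m+ℓ+1; n+1; 1/z), for z ≠ 0. -/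
/-!
Reversing the order of summation, `k ↦ ℓ - k`, matches the two series term by term. All the
parameters are integers, so every Pochhammer symbol is a ratio of factorials: `(-N)_j` is
`(-1)^j N! / (N - j)!` and `(N + 1)_k` is `(N + k)! / N!`. After this evaluation both `k`-th terms
are the same ratio of factorials times `(-1)^(ℓ - k) z^(ℓ - k)`.
-/

open Finset

open Nat

theorem poch_neg_natCast_s16 {N j : ℕ} (h : j ≤ N) :
    poch (-N) j = (-1) ^ j * N ! / (N - j)! := by
  rw [poch, ascPochhammer_eval_neg_eq_descPochhammer, descPochhammer_eval_eq_descFactorial,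
    ← Nat.factorial_mul_descFactorial h, Nat.cast_mul, mul_left_comm,
    mul_div_cancel_left₀ _ (Nat.cast_ne_zero.2 (factorial_ne_zero _))]

theorem poch_natCast_add_one (N k : ℕ) : poch (N + 1) k = (N + k)! / N ! := by
  rw [poch, ← factorial_mul_ascPochhammer ℂ N k,
    mul_div_cancel_left₀ _ (Nat.cast_ne_zero.2 (factorial_ne_zero _))]

theorem neg_one_pow_sub {R : Type*} [Monoid R] [HasDistribNeg R] {k l : ℕ} (h : k ≤ l) :
    (-1 : R) ^ (l - k) = (-1) ^ l * (-1) ^ k := by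
  obtain ⟨j, rfl⟩ := Nat.exists_eq_add_of_le h
  rw [Nat.add_sub_cancel_left, ← pow_add, show k + j + k = j + 2 * k by omega, pow_add, pow_mul,
    neg_one_sq, one_pow, mul_one]

theorem additive_case_transform_at_infinity (n m l : ℕ) (z : ℂ) (hz : z ≠ 0) :
    hyp l (-(n : ℂ) - l) (-(m : ℂ) - n - 2 * l) z =
      (Nat.factorial (n + l) : ℂ) * (Nat.factorial (n + m + l) : ℂ) /
          ((Nat.factorial n : ℂ) * (Nat.factorial (n + m + 2 * l) : ℂ)) *
        (-z) ^ l * hyp l ((n : ℂ) + m + l + 1) ((n : ℂ) + 1) (1 / z) := by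
  have hb : -(n : ℂ) - l = -((n + l : ℕ) : ℂ) := by push_cast; ring
  have hc : -(m : ℂ) - n - 2 * l = -((n + m + 2 * l : ℕ) : ℂ) := by push_cast; ring
  have hb' : (n : ℂ) + m + l + 1 = ((n + m + l : ℕ) : ℂ) + 1 := by push_cast; ring
  rw [hyp, hyp, hb, hc, hb', ← sum_range_reflect, mul_sum]
  refine sum_congr rfl fun k hk => ?_
  have hkl : k ≤ l := mem_range_succ_iff.mp hk
  rw [Nat.add_sub_cancel, poch_neg_natCast_s16 (Nat.sub_le l k),
    poch_neg_natCast_s16 (by omega : l - k ≤ n + l),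
    poch_neg_natCast_s16 (by omega : l - k ≤ n + m + 2 * l), poch_neg_natCast_s16 hkl,
    poch_natCast_add_one, poch_natCast_add_one, Nat.sub_sub_self hkl,
    show n + l - (l - k) = n + k by omega, show n + m + 2 * l - (l - k) = n + m + l + k by omega,
    neg_one_pow_sub hkl, pow_sub₀ z hz hkl, neg_pow, one_div, inv_pow]
  field_simp [Nat.factorial_ne_zero]
  ring
end
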